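/- arXiv:1008.0507 — 2 statements merged into one kernel-verified Lean document; each statement's English description precedes it below -/
import Mathlib

section
/- Let G be a group, and suppose there is a descending chain of normal subgroups γₖ (k ∈ ℤ₊) with γ₁ = G, [γₖ, G] ≤ γ_{k+1}, ⋂ₖ γₖ = {1}, and each quotient γₖ/γ_{k+1} torsion-free abelian. Then G is two-sided orderable. -/
/-!
Order each layer `γ k / γ (k + 1)` separately: it is a torsion-free abelian group, so it embeds
into a `ℚ`-vector space, which is ordered lexicographically in a basis. Then call `g ≠ 1` positive
when its image in the unique layer where it is nontrivial is positive. Because the series is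
central, conjugation does not change that image, so these positive elements form a
conjugation-invariant cone, and `f < g ↔ f⁻¹ * g` positive is a two-sided invariant order.
-/

open Function

structure IsBiorderCone {G : Type*} [Group G] (P : Set G) : Prop where
  mul_mem {a b : G} : a ∈ P → b ∈ P → a * b ∈ P
  one_notMem : (1 : G) ∉ P
  mem_or_inv_mem {a : G} : a ≠ 1 → a ∈ P ∨ a⁻¹ ∈ P
  conj_mem {a : G} (x : G) : a ∈ P → x * a * x⁻¹ ∈ P

namespace IsBiorderCone

variable {G H : Type*} [Group G] [Group H] {P : Set G}

theorem preimage (hP : IsBiorderCone P) (f : H →* G) (hf : Injective f) :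
    IsBiorderCone (f ⁻¹' P) where
  mul_mem ha hb := by simpa only [Set.mem_preimage, map_mul] using hP.mul_mem ha hb
  one_notMem := by simpa only [Set.mem_preimage, map_one] using hP.one_notMem
  mem_or_inv_mem ha := by
    simpa only [Set.mem_preimage, map_inv] using hP.mem_or_inv_mem ((map_ne_one_iff f hf).2 ha)
  conj_mem x ha := by
    simpa only [Set.mem_preimage, map_mul, map_inv] using hP.conj_mem (f x) ha

theorem exists_isStrictTotalOrder (hP : IsBiorderCone P) :
    ∃ lt : G → G → Prop, IsStrictTotalOrder G lt ∧
      ∀ f g h x : G, lt f g → lt (h * f * x) (h * g * x) := by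
  refine ⟨fun f g => f⁻¹ * g ∈ P, { trichotomous := ?_, irrefl := ?_, trans := ?_ },
    fun f g h x hfg => ?_⟩
  · intro f g hfg hgf
    by_contra hne
    rcases hP.mem_or_inv_mem (a := f⁻¹ * g) (by rwa [Ne, inv_mul_eq_one]) with h | h
    · exact hfg h
    · exact hgf (by simpa using h)
  · exact fun f h => hP.one_notMem (by simpa using h)
  · intro f g h hfg hgh
    simpa [mul_assoc] using hP.mul_mem hfg hgh
  · simpa [mul_assoc] using hP.conj_mem x⁻¹ hfg

end IsBiorderCone

theorem isBiorderCone_one_lt (L : Type*) [CommGroup L] [LinearOrder L] [IsOrderedMonoid L] :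
    IsBiorderCone {a : L | 1 < a} where
  mul_mem := one_lt_mul''
  one_notMem := lt_irrefl 1
  mem_or_inv_mem ha := ha.lt_or_gt.symm.imp_right one_lt_inv'.2
  conj_mem x ha := by simpa [mul_inv_cancel_comm] using ha

theorem IsMulTorsionFree.exists_isBiorderCone (A : Type*) [CommGroup A] [IsMulTorsionFree A] :
    ∃ P : Set A, IsBiorderCone P := by
  let V := DivisibleHull (Additive A)
  let ι := Module.Basis.ofVectorSpaceIndex ℚ V
  let : LinearOrder ι := IsWellOrder.linearOrder WellOrderingRel
  let f : Additive A →+ Lex (ι →₀ ℚ) := (toLexAddEquiv _).toAddMonoidHom.comp <|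
    (Module.Basis.ofVectorSpace ℚ V).repr.toAddMonoidHom.comp (DivisibleHull.coeAddMonoidHom _)
  have hf : Injective f := (toLexAddEquiv _).injective.comp <|
    (Module.Basis.ofVectorSpace ℚ V).repr.injective.comp DivisibleHull.coe_injective
  exact ⟨_, (isBiorderCone_one_lt _).preimage (AddMonoidHom.toMultiplicativeRight f) hf⟩

open scoped commutatorElement

section Filtration

variable {G : Type*} [Group G] {γ : ℕ → Subgroup G}

theorem exists_mem_notMem_succ (htop : γ 0 = ⊤) (hint : ∀ g : G, (∀ k, g ∈ γ k) → g = 1)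
    {g : G} (hg : g ≠ 1) : ∃ k, g ∈ γ k ∧ g ∉ γ (k + 1) := by
  by_contra! h
  exact hg <| hint g fun k => Nat.rec (htop ▸ Subgroup.mem_top g) h k

theorem commutator_mem_succ (hcomm : ∀ k, ⁅γ k, (⊤ : Subgroup G)⁆ ≤ γ (k + 1)) {k : ℕ} {g : G}
    (hg : g ∈ γ k) (x : G) : ⁅g, x⁆ ∈ γ (k + 1) :=
  hcomm k (Subgroup.commutator_mem_commutator hg (Subgroup.mem_top x))

variable (γ)

abbrev Layer (k : ℕ) : Type _ := γ k ⧸ (γ (k + 1)).subgroupOf (γ k)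

def filtrationCone (P : ∀ k, Set (Layer γ k)) : Set G :=
  {g | ∃ k, ∃ hg : g ∈ γ k, (QuotientGroup.mk ⟨g, hg⟩ : Layer γ k) ∈ P k}

variable {γ}

theorem mul_mem_filtrationCone {P : ∀ k, Set (Layer γ k)} (hγ : Antitone γ) {k : ℕ} {g n : G}
    (hg : g ∈ γ k) (hgP : (QuotientGroup.mk ⟨g, hg⟩ : Layer γ k) ∈ P k) (hn : n ∈ γ (k + 1)) :
    g * n ∈ filtrationCone γ P := by
  have hgn : g * n ∈ γ k := mul_mem hg (hγ k.le_succ hn)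
  have hmk : (QuotientGroup.mk ⟨g, hg⟩ : Layer γ k) = QuotientGroup.mk ⟨g * n, hgn⟩ :=
    QuotientGroup.eq.2 <| Subgroup.mem_subgroupOf.2 <| by simpa using hn
  exact ⟨k, hgn, hmk ▸ hgP⟩

variable [∀ k, (γ k).Normal]

theorem Layer.mk_eq_one_iff {k : ℕ} {g : G} (hg : g ∈ γ k) :
    (QuotientGroup.mk ⟨g, hg⟩ : Layer γ k) = 1 ↔ g ∈ γ (k + 1) := by
  rw [QuotientGroup.eq_one_iff, Subgroup.mem_subgroupOf]

abbrev Layer.commGroup (hcomm : ∀ k, ⁅γ k, (⊤ : Subgroup G)⁆ ≤ γ (k + 1)) (k : ℕ) :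
    CommGroup (Layer γ k) where
  mul_comm := by
    rintro ⟨a⟩ ⟨b⟩
    refine QuotientGroup.eq.2 <| Subgroup.mem_subgroupOf.2 ?_
    have : (((a * b)⁻¹ * (b * a) : γ k) : G) = ⁅(b : G)⁻¹, (a : G)⁻¹⁆ := by
      simp only [commutatorElement_def]; push_cast; group
    exact this ▸ commutator_mem_succ hcomm (inv_mem b.2) _

theorem Layer.isMulTorsionFree (hcomm : ∀ k, ⁅γ k, (⊤ : Subgroup G)⁆ ≤ γ (k + 1))
    (htf : ∀ k, ∀ g ∈ γ k, ∀ n : ℕ, 0 < n → g ^ n ∈ γ (k + 1) → g ∈ γ (k + 1)) (k : ℕ) :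
    letI := Layer.commGroup hcomm k
    IsMulTorsionFree (Layer γ k) := by
  let := Layer.commGroup hcomm k
  refine .of_not_isOfFinOrder ?_
  rintro ⟨g, hg⟩ hne hfin
  obtain ⟨n, hn, hpow⟩ := isOfFinOrder_iff_pow_eq_one.1 hfin
  exact hne <| (Layer.mk_eq_one_iff hg).2 <| htf k g hg n hn <|
    (Layer.mk_eq_one_iff (pow_mem hg n)).1 hpow

theorem isBiorderCone_filtrationCone {P : ∀ k, Set (Layer γ k)} (hγ : Antitone γ)
    (htop : γ 0 = ⊤) (hint : ∀ g : G, (∀ k, g ∈ γ k) → g = 1)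
    (hcomm : ∀ k, ⁅γ k, (⊤ : Subgroup G)⁆ ≤ γ (k + 1)) (hP : ∀ k, IsBiorderCone (P k)) :
    IsBiorderCone (filtrationCone γ P) where
  mul_mem := by
    rintro g h ⟨k, hg, hgP⟩ ⟨l, hh, hhP⟩
    rcases lt_trichotomy k l with hkl | rfl | hlk
    · exact mul_mem_filtrationCone hγ hg hgP (hγ hkl hh)
    · exact ⟨k, mul_mem hg hh, (hP k).mul_mem hgP hhP⟩
    · have hconj : h⁻¹ * g * h ∈ γ (l + 1) := by
        simpa using Subgroup.Normal.conj_mem inferInstance g (hγ hlk hg) h⁻¹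
      simpa [mul_assoc] using mul_mem_filtrationCone hγ hh hhP hconj
  one_notMem := fun ⟨k, _, hP1⟩ => (hP k).one_notMem hP1
  mem_or_inv_mem {g} hg := by
    obtain ⟨k, hgk, hgk'⟩ := exists_mem_notMem_succ htop hint hg
    exact ((hP k).mem_or_inv_mem (mt (Layer.mk_eq_one_iff hgk).1 hgk')).imp
      (⟨k, hgk, ·⟩) (⟨k, inv_mem hgk, ·⟩)
  conj_mem := by
    rintro g x ⟨k, hg, hgP⟩
    have : g * ⁅g⁻¹, x⁆ = x * g * x⁻¹ := by group
    exact this ▸ mul_mem_filtrationCone hγ hg hgP (commutator_mem_succ hcomm (inv_mem hg) x)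

end Filtration

/-- If a group `G` has a descending chain of normal subgroups `γ k` with `γ 0 = G`,
`[γ k, G] ≤ γ (k+1)`, trivial intersection, and torsion-free abelian quotients
`γ k / γ (k+1)`, then `G` is two-sided orderable. -/
theorem orderable_of_central_series {G : Type*} [Group G]
    (γ : ℕ → Subgroup G)
    (hnorm : ∀ k, (γ k).Normal)
    (htop : γ 0 = ⊤)
    (hdesc : ∀ k, γ (k + 1) ≤ γ k)
    (hcomm : ∀ k, ⁅γ k, (⊤ : Subgroup G)⁆ ≤ γ (k + 1))
    (hint : ∀ g : G, (∀ k, g ∈ γ k) → g = 1)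
    (htf : ∀ k, ∀ g ∈ γ k, ∀ n : ℕ, 0 < n → g ^ n ∈ γ (k + 1) → g ∈ γ (k + 1)) :
    ∃ lt : G → G → Prop, IsStrictTotalOrder G lt ∧
      ∀ f g h x : G, lt f g → lt (h * f * x) (h * g * x) := by
  have hlayer (k : ℕ) : ∃ P : Set (Layer γ k), IsBiorderCone P :=
    let := Layer.commGroup hcomm k
    let := Layer.isMulTorsionFree hcomm htf k
    IsMulTorsionFree.exists_isBiorderCone _
  choose P hP using hlayer
  exact (isBiorderCone_filtrationCone (antitone_nat_of_succ_le hdesc) htop hint hcomm hP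
    ).exists_isStrictTotalOrder
end

section
/- Let T be a free group on generators {t_g : g ∈ Λ} with Λ a totally ordered set, and C_g the normal closure of {t_f : f < g}, C(g) the normal closure of {t_f : f ≤ g}. Then every nontrivial w ∈ T lies in C(g) \ C_g for exactly one g ∈ Λ. -/
/-!
Membership of `w` in the normal closure of a set `S` of generators is detected by the
endomorphism killing the generators in `S`. Since `w` is a word in finitely many letters `L`,
this only depends on `S ∩ L`. For a lower set `S` meeting `L`, the set `S ∩ L` equals
`Iic l ∩ L` with `l` its largest element, so the levels `g` with `w ∈ C(g)` are controlled by
finitely many letters and have a least element. That least level is the unique `g` with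
`w ∈ C(g) \ C_g`, because `C(g) ≤ C_{g'}` whenever `g < g'`.
-/

open Subgroup Set

namespace FreeGroup

variable {α : Type*}

open Classical in
noncomputable def kill (S : Set α) : FreeGroup α →* FreeGroup α :=
  lift fun a => if a ∈ S then 1 else of a

@[simp]
theorem kill_of_mem {S : Set α} {a : α} (h : a ∈ S) : kill S (of a) = 1 := by
  simp [kill, h]

@[simp]
theorem kill_of_notMem {S : Set α} {a : α} (h : a ∉ S) : kill S (of a) = of a := by
  simp [kill, h]

theorem mem_normalClosure_iff_kill_eq_one {S : Set α} {w : FreeGroup α} :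
    w ∈ normalClosure (of '' S) ↔ kill S w = 1 := by
  constructor
  · refine fun hw => normalClosure_le_normal (N := (kill S).ker) ?_ hw
    rintro _ ⟨a, ha, rfl⟩
    exact kill_of_mem ha
  · intro hw
    let q := QuotientGroup.mk' (normalClosure (of '' S))
    -- `kill S` is the identity modulo the normal closure
    have hq : q.comp (kill S) = q := by
      refine ext_hom _ _ fun a => ?_
      by_cases ha : a ∈ S
      · have : of a ∈ normalClosure (of '' S) := subset_normalClosure ⟨a, ha, rfl⟩
        rw [MonoidHom.comp_apply, kill_of_mem ha, _root_.map_one]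
        exact ((QuotientGroup.eq_one_iff _).2 this).symm
      · rw [MonoidHom.comp_apply, kill_of_notMem ha]
    have hqw : q w = 1 := by rw [← hq, MonoidHom.comp_apply, hw, _root_.map_one]
    exact (QuotientGroup.eq_one_iff _).1 hqw

theorem exists_finset_mem_closure (w : FreeGroup α) :
    ∃ L : Finset α, w ∈ closure (of '' (L : Set α)) := by
  classical
  induction w with
  | C1 => exact ⟨∅, one_mem _⟩
  | of a => exact ⟨{a}, subset_closure ⟨a, by simp⟩⟩
  | inv_of a h => exact h.imp fun _ hL => inv_mem hL
  | mul x y hx hy =>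
    obtain ⟨L, hL⟩ := hx
    obtain ⟨M, hM⟩ := hy
    refine ⟨L ∪ M, mul_mem ?_ ?_⟩
    · exact closure_mono (image_mono (by simp)) hL
    · exact closure_mono (image_mono (by simp)) hM

theorem mem_normalClosure_iff_of_inter_eq {S S' L : Set α} {w : FreeGroup α}
    (hL : w ∈ closure (of '' L)) (h : S ∩ L = S' ∩ L) :
    w ∈ normalClosure (of '' S) ↔ w ∈ normalClosure (of '' S') := by
  have hkill : kill S w = kill S' w := by
    refine MonoidHom.eqOn_closure ?_ hL
    rintro _ ⟨a, ha, rfl⟩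
    have hS : a ∈ S ↔ a ∈ S' := by
      simpa [ha] using congrArg (a ∈ ·) h
    by_cases haS : a ∈ S
    · rw [kill_of_mem haS, kill_of_mem (hS.1 haS)]
    · rw [kill_of_notMem haS, kill_of_notMem (mt hS.2 haS)]
  rw [mem_normalClosure_iff_kill_eq_one, mem_normalClosure_iff_kill_eq_one, hkill]

theorem exists_mem_normalClosure_Iic_of_isLowerSet [LinearOrder α] {S : Set α}
    {L : Finset α} {w : FreeGroup α} (hL : w ∈ closure (of '' (L : Set α))) (hw : w ≠ 1)
    (hS : IsLowerSet S) (h : w ∈ normalClosure (of '' S)) :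
    ∃ l ∈ L, l ∈ S ∧ w ∈ normalClosure (of '' Iic l) := by
  classical
  have hne : (L.filter (· ∈ S)).Nonempty := by
    by_contra hempty
    have hinter : S ∩ L = (∅ : Set α) ∩ L := by
      ext a
      simpa using fun haS haL => hempty ⟨a, Finset.mem_filter.2 ⟨haL, haS⟩⟩
    rw [mem_normalClosure_iff_of_inter_eq hL hinter, image_empty, normalClosure_empty,
      mem_bot] at h
    exact hw h
  set l := (L.filter (· ∈ S)).max' hne
  obtain ⟨hlL, hlS⟩ := Finset.mem_filter.1 ((L.filter (· ∈ S)).max'_mem hne)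
  refine ⟨l, hlL, hlS, (mem_normalClosure_iff_of_inter_eq hL ?_).1 h⟩
  ext a
  simp only [mem_inter_iff, mem_Iic, Finset.mem_coe]
  exact ⟨fun ⟨haS, haL⟩ => ⟨(L.filter (· ∈ S)).le_max' a (Finset.mem_filter.2 ⟨haL, haS⟩), haL⟩,
    fun ⟨hal, haL⟩ => ⟨hS hal hlS, haL⟩⟩

theorem mem_normalClosure_Iic_max' [LinearOrder α] {L : Finset α} {w : FreeGroup α}
    (hL : w ∈ closure (of '' (L : Set α))) (hne : L.Nonempty) :
    w ∈ normalClosure (of '' Iic (L.max' hne)) :=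
  normalClosure_mono (image_mono fun _ ha => L.le_max' _ ha) (closure_le_normalClosure hL)

end FreeGroup

open FreeGroup

/-- Let `T` be the free group on generators indexed by a totally ordered set `Λ`, and
for `g ∈ Λ` let `C_g` (resp. `C(g)`) be the normal closure of the generators with
index `< g` (resp. `≤ g`).  Then every nontrivial `w ∈ T` lies in `C(g) \ C_g` for
exactly one `g ∈ Λ`. -/
theorem exists_unique_level {Λ : Type*} [LinearOrder Λ]
    (w : FreeGroup Λ) (hw : w ≠ 1) :
    ∃! g : Λ,
      w ∈ Subgroup.normalClosure (FreeGroup.of '' {f : Λ | f ≤ g}) ∧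
      w ∉ Subgroup.normalClosure (FreeGroup.of '' {f : Λ | f < g}) := by
  classical
  obtain ⟨L, hL⟩ := exists_finset_mem_closure w
  have hLne : L.Nonempty := by
    by_contra hempty
    rw [Finset.not_nonempty_iff_eq_empty.1 hempty, Finset.coe_empty, image_empty,
      Subgroup.closure_empty, mem_bot] at hL
    exact hw hL
  set A := L.filter fun l => w ∈ normalClosure (of '' Iic l)
  have hA : A.Nonempty :=
    ⟨L.max' hLne, Finset.mem_filter.2 ⟨L.max'_mem hLne, mem_normalClosure_Iic_max' hL hLne⟩⟩
  have hmin : ∀ {l}, l ∈ L → w ∈ normalClosure (of '' Iic l) → A.min' hA ≤ l :=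
    fun hlL hl => A.min'_le _ (Finset.mem_filter.2 ⟨hlL, hl⟩)
  refine ⟨A.min' hA, ⟨(Finset.mem_filter.1 (A.min'_mem hA)).2, fun hlt => ?_⟩, ?_⟩
  · obtain ⟨l, hlL, hl, hwl⟩ := exists_mem_normalClosure_Iic_of_isLowerSet hL hw (isLowerSet_Iio _) hlt
    exact (hmin hlL hwl).not_gt hl
  · rintro g ⟨hle, hnlt⟩
    obtain ⟨l, hlL, hl, hwl⟩ := exists_mem_normalClosure_Iic_of_isLowerSet hL hw (isLowerSet_Iic _) hle
    refine ((hmin hlL hwl).trans hl).antisymm' (not_lt.1 fun hlt => hnlt ?_)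
    exact normalClosure_mono (image_mono fun _ hf => lt_of_le_of_lt hf hlt)
      (Finset.mem_filter.1 (A.min'_mem hA)).2
end
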